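/- The pushforward of the Haar measure d on the unit circle under u ↦ u + u⁻¹ is the arcsine distribution on [-2, 2], with density x ↦ 1/(π√(4 - x²)). -/

import Mathlib

/-!
Parametrize the circle by `u = exp (θ i)` with `θ ∈ (0, 2π]`, so that `2 Re u = 2 cos θ`. The
reflection `θ ↦ 2π - θ` preserves Lebesgue measure and `2 cos`, so the two halves of the circle
push forward to the same measure, and on `(0, π)` the map `2 cos` is injective onto `(-2, 2)` with
`|d(2 cos θ)/dθ| = 2 sin θ = √(4 - (2 cos θ)²)`. The change of variables formula then turns the
uniform density `1/π` on `(0, π)` into the arcsine density.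
-/

open MeasureTheory Complex Real

/-- Haar probability measure on the unit circle in ℂ. -/
noncomputable def haarCircle : Measure ℂ :=
  (ENNReal.ofReal (2 * π))⁻¹ •
    Measure.map (fun θ : ℝ => Complex.exp (θ * Complex.I))
      (volume.restrict (Set.Ioc 0 (2 * π)))

/-- The arcsine distribution on [-2, 2], with density 1/(π√(4 - x²)). -/
noncomputable def arcsineDist : Measure ℝ :=
  (volume.restrict (Set.Ioo (-2 : ℝ) 2)).withDensity
    (fun x => ENNReal.ofReal (1 / (π * Real.sqrt (4 - x ^ 2))))

open Set
open scoped ENNReal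

theorem ENNReal.inv_ofReal_two_mul_mul_two (x : ℝ) :
    (ENNReal.ofReal (2 * x))⁻¹ * 2 = (ENNReal.ofReal x)⁻¹ := by
  rw [ENNReal.ofReal_mul zero_le_two, ENNReal.ofReal_ofNat,
    ENNReal.mul_inv (Or.inl two_ne_zero) (Or.inl ENNReal.ofNat_ne_top), mul_right_comm,
    ENNReal.inv_mul_cancel two_ne_zero ENNReal.ofNat_ne_top, one_mul]

theorem map_restrict_withDensity_abs_deriv_mul_comp {s : Set ℝ} {f f' : ℝ → ℝ}
    (hs : MeasurableSet s) (hf' : ∀ x ∈ s, HasDerivWithinAt f (f' x) s x) (hf : InjOn f s)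
    (hfm : Measurable f) (g : ℝ → ℝ≥0∞) :
    Measure.map f ((volume.restrict s).withDensity fun x => ENNReal.ofReal |f' x| * g (f x)) =
      (volume.restrict (f '' s)).withDensity g := by
  ext t ht
  have hst : MeasurableSet (f ⁻¹' t ∩ s) := hfm ht |>.inter hs
  rw [Measure.map_apply hfm ht, withDensity_apply _ (hfm ht), withDensity_apply _ ht,
    Measure.restrict_restrict (hfm ht), Measure.restrict_restrict ht, ← image_preimage_inter,
    lintegral_image_eq_lintegral_abs_deriv_mul hst
      (fun x hx => (hf' x hx.2).mono inter_subset_right) (hf.mono inter_subset_right)]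

theorem map_restrict_Ioc_eq_two_smul_of_symmetric {f : ℝ → ℝ} (hfm : Measurable f) {a c : ℝ}
    (hac : a < c) (hf : ∀ x, f (2 * c - x) = f x) :
    Measure.map f (volume.restrict (Ioc a (2 * c - a))) =
      (2 : ℝ≥0∞) • Measure.map f (volume.restrict (Ioo a c)) := by
  have hsplit : volume.restrict (Ioc a (2 * c - a)) =
      volume.restrict (Ioo a c) + volume.restrict (Icc c (2 * c - a)) := by
    have hdisj : Disjoint (Ioo a c) (Icc c (2 * c - a)) :=
      (Iio_disjoint_Ici le_rfl).mono Ioo_subset_Iio_self Icc_subset_Ici_self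
    rw [← Measure.restrict_union hdisj measurableSet_Icc, Ioo_union_Icc_eq_Ioc hac (by linarith)]
  have hreflect : MeasurePreserving (fun x : ℝ => 2 * c - x) volume volume :=
    Measure.measurePreserving_sub_left volume (2 * c)
  have hpreimage : (fun x : ℝ => 2 * c - x) ⁻¹' Ioo a c = Ioo c (2 * c - a) := by
    ext x
    simp only [mem_preimage, mem_Ioo]
    constructor <;> rintro ⟨h₁, h₂⟩ <;> constructor <;> linarith
  have hupper : Measure.map f (volume.restrict (Icc c (2 * c - a))) =
      Measure.map f (volume.restrict (Ioo a c)) := by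
    rw [← Measure.restrict_congr_set Ioo_ae_eq_Icc, ← hpreimage,
      ← (hreflect.restrict_preimage measurableSet_Ioo).map_eq,
      Measure.map_map hfm hreflect.measurable, show f ∘ (fun x => 2 * c - x) = f from funext hf]
  rw [hsplit, Measure.map_add _ _ hfm, hupper, two_smul]

namespace Real

theorem injOn_two_mul_cos : InjOn (fun θ => 2 * cos θ) (Ioo 0 π) := fun a ha b hb h =>
  injOn_cos (Ioo_subset_Icc_self ha) (Ioo_subset_Icc_self hb) (by simpa using h)

theorem image_two_mul_cos_Ioo : (fun θ => 2 * cos θ) '' Ioo 0 π = Ioo (-2) 2 := by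
  ext y
  constructor
  · rintro ⟨θ, ⟨h0, hπ⟩, rfl⟩
    have hlt : cos θ < cos 0 := strictAntiOn_cos ⟨le_rfl, pi_pos.le⟩ ⟨h0.le, hπ.le⟩ h0
    have hgt : cos π < cos θ := strictAntiOn_cos ⟨h0.le, hπ.le⟩ ⟨pi_pos.le, le_rfl⟩ hπ
    rw [cos_zero] at hlt
    rw [cos_pi] at hgt
    constructor <;> linarith
  · rintro ⟨h₁, h₂⟩
    refine ⟨arccos (y / 2), ⟨arccos_pos.2 (by linarith), ?_⟩, ?_⟩
    · exact (arccos_le_pi _).lt_of_ne fun h => by linarith [arccos_eq_pi.1 h]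
    · simp only
      rw [cos_arccos (by linarith) (by linarith)]
      ring

theorem abs_two_mul_sin_mul_arcsine_density {θ : ℝ} (hθ : θ ∈ Ioo 0 π) :
    |-(2 * sin θ)| * (1 / (π * √(4 - (2 * cos θ) ^ 2))) = 1 / π := by
  have hsin : 0 < sin θ := sin_pos_of_pos_of_lt_pi hθ.1 hθ.2
  have hsq : 4 - (2 * cos θ) ^ 2 = (2 * sin θ) ^ 2 := by nlinarith [sin_sq_add_cos_sq θ]
  rw [hsq, sqrt_sq (by positivity), abs_neg, abs_of_pos (by positivity)]
  field_simp

end Real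

theorem arcsineDist_eq_smul_map_two_mul_cos :
    arcsineDist = (ENNReal.ofReal π)⁻¹ •
      Measure.map (fun θ => 2 * Real.cos θ) (volume.restrict (Ioo 0 π)) := by
  have hderiv (θ : ℝ) :
      HasDerivWithinAt (fun θ => 2 * Real.cos θ) (-(2 * Real.sin θ)) (Ioo 0 π) θ := by
    simpa using ((Real.hasDerivAt_cos θ).const_mul 2).hasDerivWithinAt
  rw [arcsineDist, ← Real.image_two_mul_cos_Ioo, ← map_restrict_withDensity_abs_deriv_mul_comp
    measurableSet_Ioo (fun θ _ => hderiv θ) Real.injOn_two_mul_cos (by fun_prop),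
    ← Measure.map_smul, ← withDensity_const]
  congr 1
  refine withDensity_congr_ae ?_
  filter_upwards [ae_restrict_mem measurableSet_Ioo] with θ hθ
  rw [← ENNReal.ofReal_mul (abs_nonneg _), Real.abs_two_mul_sin_mul_arcsine_density hθ,
    one_div, ENNReal.ofReal_inv_of_pos pi_pos]

theorem map_two_mul_re_haarCircle :
    Measure.map (fun u : ℂ => 2 * u.re) haarCircle =
      (ENNReal.ofReal (2 * π))⁻¹ •
        Measure.map (fun θ => 2 * Real.cos θ) (volume.restrict (Ioc 0 (2 * π))) := by
  rw [haarCircle, Measure.map_smul, Measure.map_map (by fun_prop) (by fun_prop)]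
  congr 2
  funext θ
  simp [exp_ofReal_mul_I_re]

theorem map_haar_arcsine :
    Measure.map (fun u : ℂ => 2 * u.re) haarCircle = arcsineDist := by
  have hhalf := map_restrict_Ioc_eq_two_smul_of_symmetric (a := 0)
    (by fun_prop : Measurable fun θ => 2 * Real.cos θ) pi_pos
    fun θ => by rw [Real.cos_two_pi_sub]
  rw [sub_zero] at hhalf
  rw [map_two_mul_re_haarCircle, hhalf, smul_smul, ENNReal.inv_ofReal_two_mul_mul_two,
    arcsineDist_eq_smul_map_two_mul_cos]
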